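/- For every real N > 0 and every real b with |b| < 1: ∫_{-1}^{1} (1 - bz)^{-2N} · f^{(N)}(z) dz = (1 - b²)^{-N}. -/

import Mathlib

/-!
The substitution `z = (t + b) / (1 + b t)`, an increasing bijection of `[-1, 1]` onto itself, has
`dz = (1 - b²) / (1 + b t)² dt` and turns `1 - b z` into `(1 - b²) / (1 + b t)` and `1 - z²` into
`(1 - t²) (1 - b²) / (1 + b t)²`. The powers of `1 + b t` then cancel exactly, so the integrand
becomes `(1 - b²)^(-N) f^(N)(t)`, and it remains that `f^(N)` has mass one. With `z = 2x - 1` the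
mass is `2^(2N-1) B(N, N) Γ(N + 1/2) / (Γ(N) Γ(1/2))`, which is `1` by Legendre's duplication formula.
-/

open MeasureTheory

/-- The symmetric Student-r density
`f^(N)(z) = (Γ(N+1/2)/(Γ(N)Γ(1/2))) (1-z²)^(N-1)` on `[-1,1]`. -/
noncomputable def studentPdf (N z : ℝ) : ℝ :=
  if -1 ≤ z ∧ z ≤ 1 then
    Real.Gamma (N + 1 / 2) / (Real.Gamma N * Real.Gamma (1 / 2)) * (1 - z ^ 2) ^ (N - 1)
  else 0

open Set Real

theorem integral_rpow_mul_one_sub_rpow {a b : ℝ} (ha : 0 < a) (hb : 0 < b) :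
    ∫ x in (0 : ℝ)..1, x ^ (a - 1) * (1 - x) ^ (b - 1) =
      Gamma a * Gamma b / Gamma (a + b) := by
  have hβ : Complex.betaIntegral a b = ↑(∫ x in (0 : ℝ)..1, x ^ (a - 1) * (1 - x) ^ (b - 1)) := by
    rw [Complex.betaIntegral, ← intervalIntegral.integral_ofReal]
    refine intervalIntegral.integral_congr fun x hx => ?_
    rw [uIcc_of_le zero_le_one] at hx
    push_cast
    rw [Complex.ofReal_cpow hx.1, Complex.ofReal_cpow (sub_nonneg.2 hx.2)]
    push_cast; rfl
  have h := Complex.betaIntegral_eq_Gamma_mul_div a b (by simpa) (by simpa)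
  rw [hβ, ← Complex.ofReal_add, Complex.Gamma_ofReal, Complex.Gamma_ofReal,
    Complex.Gamma_ofReal] at h
  exact_mod_cast h

theorem integral_one_sub_sq_rpow {N : ℝ} (hN : 0 < N) :
    ∫ z in (-1 : ℝ)..1, (1 - z ^ 2) ^ (N - 1) = √π * Gamma N / Gamma (N + 1 / 2) := by
  have hlin : ∫ x in (0 : ℝ)..1, (1 - (2 * x - 1) ^ 2) ^ (N - 1) =
      1 / 2 * ∫ z in (-1 : ℝ)..1, (1 - z ^ 2) ^ (N - 1) := by
    have := intervalIntegral.integral_comp_mul_sub (fun z : ℝ => (1 - z ^ 2) ^ (N - 1))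
      (a := 0) (b := 1) two_ne_zero 1
    norm_num at this
    exact this
  have hbeta : ∫ x in (0 : ℝ)..1, (1 - (2 * x - 1) ^ 2) ^ (N - 1) =
      4 ^ (N - 1) * (Gamma N * Gamma N / Gamma (2 * N)) := by
    rw [two_mul, ← integral_rpow_mul_one_sub_rpow hN hN, ← intervalIntegral.integral_const_mul]
    refine intervalIntegral.integral_congr fun x hx => ?_
    rw [uIcc_of_le zero_le_one] at hx
    rw [show 1 - (2 * x - 1) ^ 2 = 4 * (x * (1 - x)) by ring,
      mul_rpow (by norm_num) (mul_nonneg hx.1 (sub_nonneg.2 hx.2)),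
      mul_rpow hx.1 (sub_nonneg.2 hx.2)]
  have hpow : (4 : ℝ) ^ (N - 1) * 2 ^ (1 - 2 * N) * 2 = 1 := by
    rw [show (4 : ℝ) = 2 ^ (2 : ℝ) by norm_num, ← rpow_mul zero_le_two, ← rpow_add two_pos,
      ← rpow_add_one two_ne_zero, show 2 * (N - 1) + (1 - 2 * N) + 1 = 0 by ring, rpow_zero]
  have hdup := Gamma_mul_Gamma_add_half N
  have hΓ : 0 < Gamma (2 * N) := Gamma_pos_of_pos (by linarith)
  rw [hlin] at hbeta
  rw [eq_div_iff (Gamma_pos_of_pos (by linarith)).ne']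
  field_simp at hbeta
  apply mul_right_cancel₀ hΓ.ne'
  linear_combination Gamma (N + 1 / 2) * hbeta + 2 * 4 ^ (N - 1) * Gamma N * hdup +
    Gamma N * Gamma (2 * N) * √π * hpow

theorem studentPdf_of_mem_Icc (N : ℝ) {z : ℝ} (hz : z ∈ Icc (-1) 1) :
    studentPdf N z = Gamma (N + 1 / 2) / (Gamma N * Gamma (1 / 2)) * (1 - z ^ 2) ^ (N - 1) :=
  if_pos hz

theorem integral_studentPdf {N : ℝ} (hN : 0 < N) : ∫ z in (-1 : ℝ)..1, studentPdf N z = 1 := by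
  rw [intervalIntegral.integral_congr fun z hz =>
      studentPdf_of_mem_Icc N (uIcc_of_le (by norm_num : (-1 : ℝ) ≤ 1) ▸ hz),
    intervalIntegral.integral_const_mul, integral_one_sub_sq_rpow hN, Gamma_one_half_eq]
  have : 0 < Gamma N := Gamma_pos_of_pos hN
  have : 0 < Gamma (N + 1 / 2) := Gamma_pos_of_pos (by linarith)
  field_simp

noncomputable def mobius (b t : ℝ) : ℝ := (t + b) / (1 + b * t)

theorem one_add_mul_pos {b t : ℝ} (hb : |b| < 1) (ht : t ∈ Icc (-1) 1) : 0 < 1 + b * t := by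
  have : |b * t| < 1 := by
    rw [abs_mul]
    exact (mul_le_of_le_one_right (abs_nonneg b) (abs_le.2 ht)).trans_lt hb
  linarith [neg_abs_le (b * t)]

theorem one_sub_mul_mobius {b t : ℝ} (h : 1 + b * t ≠ 0) :
    1 - b * mobius b t = (1 - b ^ 2) / (1 + b * t) := by
  rw [mobius]; field_simp; ring

theorem one_sub_mobius_sq {b t : ℝ} (h : 1 + b * t ≠ 0) :
    1 - mobius b t ^ 2 = (1 - t ^ 2) * ((1 - b ^ 2) / (1 + b * t) ^ 2) := by
  rw [mobius, div_pow, one_sub_div (pow_ne_zero 2 h), mul_div_assoc']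
  ring

theorem hasDerivAt_mobius {b t : ℝ} (h : 1 + b * t ≠ 0) :
    HasDerivAt (mobius b) ((1 - b ^ 2) / (1 + b * t) ^ 2) t := by
  have := ((hasDerivAt_id' t).add_const b).div ((hasDerivAt_id' t).const_mul b |>.const_add 1) h
  exact this.congr_deriv (by ring)

theorem mobius_mem_Icc {b t : ℝ} (hb : |b| < 1) (ht : t ∈ Icc (-1) 1) :
    mobius b t ∈ Icc (-1) 1 := by
  have h := one_add_mul_pos hb ht
  have hsq : 0 ≤ 1 - mobius b t ^ 2 := by
    rw [one_sub_mobius_sq h.ne']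
    have : 0 ≤ 1 - t ^ 2 := by nlinarith [ht.1, ht.2]
    have : 0 ≤ 1 - b ^ 2 := by nlinarith [abs_lt.1 hb]
    positivity
  exact abs_le.1 (sq_le_one_iff_abs_le_one _ |>.1 (by linarith))

theorem mobius_neg_one {b : ℝ} (hb : b ≠ 1) : mobius b (-1) = -1 := by
  rw [mobius, div_eq_iff (by intro h; apply hb; linarith)]; ring

theorem mobius_one {b : ℝ} (hb : b ≠ -1) : mobius b 1 = 1 := by
  rw [mobius, div_eq_iff (by intro h; apply hb; linarith)]; ring

theorem studentPdf_mobius (N : ℝ) {b t : ℝ} (hb : |b| < 1) (ht : t ∈ Icc (-1) 1) :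
    (1 - b * mobius b t) ^ (-(2 * N)) * studentPdf N (mobius b t) *
        ((1 - b ^ 2) / (1 + b * t) ^ 2) = (1 - b ^ 2) ^ (-N) * studentPdf N t := by
  have hd := one_add_mul_pos hb ht
  have hc : 0 < 1 - b ^ 2 := by nlinarith [abs_lt.1 hb]
  have ht2 : 0 ≤ 1 - t ^ 2 := by nlinarith [ht.1, ht.2]
  set q := (1 - b ^ 2) / (1 + b * t) ^ 2
  have hq : 0 < q := by positivity
  have hpos : 0 < 1 - b * mobius b t := by rw [one_sub_mul_mobius hd.ne']; positivity
  have hsq : (1 - b * mobius b t) ^ 2 = (1 - b ^ 2) * q := by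
    rw [one_sub_mul_mobius hd.ne', div_pow, sq (1 - b ^ 2), mul_div_assoc]
  have hexp : (1 - b * mobius b t) ^ (-(2 * N)) = ((1 - b * mobius b t) ^ 2) ^ (-N) := by
    rw [← rpow_natCast, ← rpow_mul hpos.le]; push_cast; ring_nf
  have hq1 : q ^ (-N) * q ^ (N - 1) * q = 1 := by
    rw [← rpow_add hq, ← rpow_add_one hq.ne', show -N + (N - 1) + 1 = 0 by ring, rpow_zero]
  rw [studentPdf_of_mem_Icc N (mobius_mem_Icc hb ht), studentPdf_of_mem_Icc N ht,
    one_sub_mobius_sq hd.ne', hexp, hsq, mul_rpow hc.le hq.le, mul_rpow ht2 hq.le]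
  linear_combination (1 - b ^ 2) ^ (-N) * (Gamma (N + 1 / 2) / (Gamma N * Gamma (1 / 2))) *
    (1 - t ^ 2) ^ (N - 1) * hq1

/-- For `N > 0` and `|b| < 1`: `∫_{-1}^1 (1 - bz)^(-2N) f^(N)(z) dz = (1 - b²)^(-N)`. -/
theorem studentPdf_integral (N : ℝ) (hN : 0 < N) (b : ℝ) (hb : |b| < 1) :
    ∫ z in (-1 : ℝ)..1, (1 - b * z) ^ (-(2 * N)) * studentPdf N z = (1 - b ^ 2) ^ (-N) := by
  have hIcc : uIcc (-1 : ℝ) 1 = Icc (-1) 1 := uIcc_of_le (by norm_num)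
  have hderiv : ∀ t ∈ uIcc (-1 : ℝ) 1, HasDerivAt (mobius b) ((1 - b ^ 2) / (1 + b * t) ^ 2) t :=
    fun t ht => hasDerivAt_mobius (one_add_mul_pos hb (hIcc ▸ ht)).ne'
  obtain ⟨hb₁, hb₂⟩ := abs_lt.1 hb
  calc ∫ z in (-1 : ℝ)..1, (1 - b * z) ^ (-(2 * N)) * studentPdf N z
      = ∫ t in (-1 : ℝ)..1, (1 - b * mobius b t) ^ (-(2 * N)) * studentPdf N (mobius b t) *
          ((1 - b ^ 2) / (1 + b * t) ^ 2) := by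
        -- `mobius b` is increasing, so this change of variables needs no integrability hypothesis.
        have := intervalIntegral.integral_comp_mul_deriv_of_deriv_nonneg
          (g := fun z => (1 - b * z) ^ (-(2 * N)) * studentPdf N z)
          (HasDerivAt.continuousOn hderiv)
          (fun t ht => hderiv t (Ioo_subset_Icc_self ht))
          (fun t _ => div_nonneg (by nlinarith) (sq_nonneg _))
        rw [mobius_neg_one hb₂.ne, mobius_one hb₁.ne'] at this
        exact this.symm
    _ = ∫ t in (-1 : ℝ)..1, (1 - b ^ 2) ^ (-N) * studentPdf N t :=
        intervalIntegral.integral_congr fun t ht => studentPdf_mobius N hb (hIcc ▸ ht)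
    _ = (1 - b ^ 2) ^ (-N) := by
        rw [intervalIntegral.integral_const_mul, integral_studentPdf hN, mul_one]
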